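/- Let θ be a topological partial action of G on X. The quotient map p : G × X → X_G, (g,x) ↦ [g,x], is an open map. -/

import Mathlib

/-- A set-theoretic partial action of a group `G` on a set `X`, encoded by a
domain predicate `dom g x` (meaning "`g • x` is defined") and a total map `act`
whose values are only relevant on the domain; axioms (PA1)-(PA3). -/
structure SetPartialAction (G : Type*) (X : Type*) [Group G] where
  dom : G → X → Prop
  act : G → X → X
  dom_one : ∀ x, dom 1 x
  act_one : ∀ x, act 1 x = x
  dom_inv : ∀ g x, dom g x → dom g⁻¹ (act g x)
  act_inv : ∀ g x, dom g x → act g⁻¹ (act g x) = x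
  dom_mul : ∀ g h x, dom h x → dom g (act h x) → dom (g * h) x
  act_mul : ∀ g h x, dom h x → dom g (act h x) → act g (act h x) = act (g * h) x

/-- The enveloping relation on `G × X`: `(g,x) R (h,y)` iff `x ∈ X_{g⁻¹h}`
(i.e. `θ_{h⁻¹g}` is defined at `x`) and `θ_{h⁻¹g}(x) = y`. -/
def envRel {G X : Type*} [Group G] (θ : SetPartialAction G X) :
    (G × X) → (G × X) → Prop :=
  fun p q => θ.dom (q.1⁻¹ * p.1) p.2 ∧ θ.act (q.1⁻¹ * p.1) p.2 = q.2

/-- A topological partial action: each domain X_g is open and each θ_g is a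
homeomorphism of X_{g⁻¹} onto X_g (encoded by continuity of act g on its domain,
the inverse being act g⁻¹). -/
structure TopPartialAction (G X : Type*) [Group G] [TopologicalSpace G]
    [TopologicalSpace X] extends SetPartialAction G X where
  isOpen_dom : ∀ g, IsOpen {x | dom g x}
  continuousOn_act : ∀ g, ContinuousOn (act g) {x | dom g x}

lemma envRel_equiv {G X : Type*} [Group G] (θ : SetPartialAction G X) :
    Equivalence (envRel θ) := by
  constructor
  · intro p
    exact ⟨by simpa using θ.dom_one p.2, by simpa using θ.act_one p.2⟩
  · rintro ⟨g, x⟩ ⟨h, y⟩ ⟨hd, ha⟩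
    refine ⟨?_, ?_⟩
    · have := θ.dom_inv _ _ hd
      simp only [ha] at this
      simpa [mul_inv_rev] using this
    · have := θ.act_inv _ _ hd
      simp only [ha] at this
      simpa [mul_inv_rev] using this
  · rintro ⟨g, x⟩ ⟨h, y⟩ ⟨k, z⟩ ⟨hd1, ha1⟩ ⟨hd2, ha2⟩
    have hd2' : θ.dom (k⁻¹ * h) (θ.act (h⁻¹ * g) x) := by rw [ha1]; exact hd2
    have hmul : (k⁻¹ * h) * (h⁻¹ * g) = k⁻¹ * g := by group
    refine ⟨?_, ?_⟩
    · have := θ.dom_mul _ _ _ hd1 hd2'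
      rwa [hmul] at this
    · have := θ.act_mul _ _ _ hd1 hd2'
      rw [hmul] at this
      rw [← this, ha1, ha2]

/-- For a topological partial action, the quotient map
p : G × X → X_G, (g,x) ↦ [g,x], is an open map. -/
theorem stmt6 {G X : Type*} [Group G] [TopologicalSpace G] [IsTopologicalGroup G]
    [T2Space G] [TopologicalSpace X] (θ : TopPartialAction G X) :
    IsOpenMap (Quot.mk (envRel θ.toSetPartialAction)) := by
  set r := envRel θ.toSetPartialAction with hr
  have hequiv := envRel_equiv θ.toSetPartialAction
  have key : ∀ a b : G × X, Quot.mk r a = Quot.mk r b ↔ r a b := by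
    intro a b
    rw [Quot.eq, Equivalence.eqvGen_iff hequiv]
  intro U hU
  rw [isOpen_coinduced]
  have hsat : Quot.mk r ⁻¹' (Quot.mk r '' U) =
      ⋃ t : G, ((Set.univ ×ˢ {y : X | θ.dom t y}) ∩
        ((fun q : G × X => (q.1 * t⁻¹, θ.act t q.2)) ⁻¹' U)) := by
    ext ⟨h, y⟩
    simp only [Set.mem_preimage, Set.mem_image, Set.mem_iUnion, Set.mem_inter_iff,
      Set.mem_prod, Set.mem_univ, true_and, Set.mem_setOf_eq]
    constructor
    · rintro ⟨p, hpU, hpq⟩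
      obtain ⟨hd, ha⟩ := hequiv.symm ((key p (h, y)).mp hpq)
      refine ⟨p.1⁻¹ * h, hd, ?_⟩
      have h1 : h * (p.1⁻¹ * h)⁻¹ = p.1 := by group
      simpa [h1, ha] using hpU
    · rintro ⟨t, hd, hU'⟩
      refine ⟨(h * t⁻¹, θ.act t y), hU', ?_⟩
      refine (key _ _).mpr ⟨?_, ?_⟩
      · simpa using θ.dom_inv _ _ hd
      · simpa using θ.act_inv _ _ hd
  rw [hsat]
  refine isOpen_iUnion fun t => ?_
  have hcont : ContinuousOn (fun q : G × X => (q.1 * t⁻¹, θ.act t q.2))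
      (Set.univ ×ˢ {y : X | θ.dom t y}) := by
    refine ContinuousOn.prodMk ?_ ?_
    · exact ((continuous_fst.mul continuous_const)).continuousOn
    · exact (θ.continuousOn_act t).comp continuous_snd.continuousOn
        (fun q hq => hq.2)
  exact hcont.isOpen_inter_preimage (isOpen_univ.prod (θ.isOpen_dom t)) hU
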